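/- arXiv:2004.11166 — 2 statements merged into one kernel-verified Lean document; each statement's English description precedes it below -/
import Mathlib

section
/- Let P be a GMMN instance whose intersection graph IG[P] is k-colorable, i.e., P can be partitioned into k sets each of which is an independent set of IG[P], and let N* ∈ Opt(P) be an optimal solution for P. Then every feasible solution N ∈ Feas(P) satisfies ‖N‖ ≤ k·‖N*‖. (Proposition B.1.) -/
noncomputable section
open scoped Classical

/-- A point in the Euclidean plane. -/
abbrev Point : Type := ℝ × ℝ

/-- The Manhattan distance `d(p, q)`. -/
def manh (p q : Point) : ℝ := |p.1 - q.1| + |p.2 - q.2|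

/-- The Euclidean length `‖pq‖` of the segment between `p` and `q`. -/
def euclen (p q : Point) : ℝ := Real.sqrt ((p.1 - q.1) ^ 2 + (p.2 - q.2) ^ 2)

/-- The segment `pq` is axis-aligned. -/
def axisAligned (p q : Point) : Prop := p.1 = q.1 ∨ p.2 = q.2

/-- `z` lies in the bounding box `B(a, b)` (componentwise between `a ⊓ b` and `a ⊔ b`). -/
def inBox (a b z : Point) : Prop := a ⊓ b ≤ z ∧ z ≤ a ⊔ b

lemma euclen_comm (p q : Point) : euclen p q = euclen q p := by
  unfold euclen; ring_nf

/-- Length of an (unordered) edge. -/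
def sym2Len : Sym2 Point → ℝ := Sym2.lift ⟨euclen, euclen_comm⟩

/-- The length of a network, given by its (finite) edge set. -/
def netLength (N : Finset (Sym2 Point)) : ℝ := ∑ e ∈ N, sym2Len e

/-- A (simple) path in the plane, given by its sequence of (distinct) vertices. -/
structure GPath where
  k : ℕ
  pts : Fin (k + 1) → Point
  inj : Function.Injective pts

/-- The `i`-th edge of a path. -/
def GPath.edge (π : GPath) (i : Fin π.k) : Sym2 Point :=
  s(π.pts i.castSucc, π.pts i.succ)

/-- The edge set of a path. -/
def GPath.edges (π : GPath) : Finset (Sym2 Point) :=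
  Finset.image π.edge Finset.univ

/-- The total (Euclidean) length of a path. -/
def GPath.length (π : GPath) : ℝ :=
  ∑ i : Fin π.k, euclen (π.pts i.castSucc) (π.pts i.succ)

/-- `π` is a Manhattan path (M-path) for the pair `(s, t)`: an `s`–`t` path all of whose
edges are axis-aligned and whose total length equals the Manhattan distance `d(s, t)`. -/
def IsMPath (s t : Point) (π : GPath) : Prop :=
  π.pts 0 = s ∧ π.pts (Fin.last π.k) = t ∧
  (∀ i : Fin π.k, axisAligned (π.pts i.castSucc) (π.pts i.succ)) ∧
  π.length = manh s t

/-- A GMMN instance: a finite set of pairs of points. -/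
abbrev Inst : Type := Finset (Point × Point)

/-- The vertex set of the Hanan grid `H(P)`. -/
def hananV (P : Inst) : Finset Point :=
  ((P.image fun v => v.1.1) ∪ (P.image fun v => v.2.1)) ×ˢ
  ((P.image fun v => v.1.2) ∪ (P.image fun v => v.2.2))

/-- `{p, q}` is an edge of the Hanan grid `H(P)`: an axis-aligned segment between two distinct
grid vertices containing no third grid vertex. -/
def IsHananEdge (P : Inst) (p q : Point) : Prop :=
  p ∈ hananV P ∧ q ∈ hananV P ∧ p ≠ q ∧ axisAligned p q ∧
  ∀ z ∈ hananV P, inBox p q z → z = p ∨ z = q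

/-- All edges of the path `π` are edges of the Hanan grid `H(P)`. -/
def OnGrid (P : Inst) (π : GPath) : Prop :=
  ∀ i : Fin π.k, IsHananEdge P (π.pts i.castSucc) (π.pts i.succ)

/-- `π ∈ Π_P(u)`: an M-path for the pair `u` that is a subgraph of the Hanan grid `H(P)`. -/
def InPi (P : Inst) (u : Point × Point) (π : GPath) : Prop :=
  IsMPath u.1 u.2 π ∧ OnGrid P π

/-- The network `∪_{v ∈ P} π_v` determined by a choice of M-paths. -/
def netOf (P : Inst) (f : Point × Point → GPath) : Finset (Sym2 Point) :=
  P.biUnion fun v => (f v).edges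

/-- `f` gives a feasible solution in `Feas(P)`: an M-path on the Hanan grid for each pair. -/
def IsFeasChoice (P : Inst) (f : Point × Point → GPath) : Prop :=
  ∀ v ∈ P, InPi P v (f v)

/-- `f` gives an optimal solution in `Opt(P)`. -/
def IsOptChoice (P : Inst) (f : Point × Point → GPath) : Prop :=
  IsFeasChoice P f ∧
  ∀ g : Point × Point → GPath, IsFeasChoice P g →
    netLength (netOf P f) ≤ netLength (netOf P g)

/-- Adjacency in the intersection graph `IG[P]`: `u ≠ v` and the induced subgrids
`H(P, u)` and `H(P, v)` share an edge. -/
def IGAdj (P : Inst) (u v : Point × Point) : Prop :=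
  u ≠ v ∧ ∃ p q : Point, IsHananEdge P p q ∧
    inBox u.1 u.2 p ∧ inBox u.1 u.2 q ∧ inBox v.1 v.2 p ∧ inBox v.1 v.2 q

/-- The total length `‖π₁ ∩ π₂‖` of the segments shared by two paths. -/
def sharedLen (π₁ π₂ : GPath) : ℝ := netLength (π₁.edges ∩ π₂.edges)

/-- A pair `(p, q)` with `p_x ≤ q_x` is regular if `p_y ≤ q_y`. -/
def Regular (u : Point × Point) : Prop := u.1.1 ≤ u.2.1 ∧ u.1.2 ≤ u.2.2

/-- A pair `(p, q)` with `p_x ≤ q_x` is flipped if `p_y ≥ q_y`. -/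
def Flipped (u : Point × Point) : Prop := u.1.1 ≤ u.2.1 ∧ u.2.2 ≤ u.1.2

/-- The intersection graph `IG[P]` as a simple graph on the pairs of `P`. -/
def IG (P : Inst) : SimpleGraph {v : Point × Point // v ∈ P} where
  Adj u v := IGAdj P u.1 v.1
  symm := ⟨by
    rintro u v ⟨hne, p, q, he, h1, h2, h3, h4⟩
    exact ⟨hne.symm, p, q, he, h3, h4, h1, h2⟩⟩
  loopless := ⟨fun u h => h.1 rfl⟩

/-!
Edges of M-paths stay inside the bounding boxes of their pairs, so on the Hanan grid the M-paths
of two pairs that are not adjacent in `IG[P]` are edge-disjoint. Hence for every feasible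
solution, the subnetwork serving one colour class is a disjoint union of M-paths, of length
exactly the sum of the Manhattan distances of its pairs; this does not depend on the solution.
Writing `N_i` for the part of `N` serving colour class `i`, this gives
`‖N‖ ≤ ∑ᵢ ‖N_i‖ = ∑ᵢ ‖N*_i‖ ≤ k ‖N*‖`.
-/

open Finset

lemma sym2Len_nonneg (e : Sym2 Point) : 0 ≤ sym2Len e := by
  induction e using Sym2.inductionOn with
  | hf a b => exact Real.sqrt_nonneg _

lemma netLength_mono {A B : Finset (Sym2 Point)} (h : A ⊆ B) : netLength A ≤ netLength B :=
  sum_le_sum_of_subset_of_nonneg h fun e _ _ => sym2Len_nonneg e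

lemma netLength_union_le (A B : Finset (Sym2 Point)) :
    netLength (A ∪ B) ≤ netLength A + netLength B := by
  have hinter : 0 ≤ netLength (A ∩ B) := sum_nonneg fun e _ => sym2Len_nonneg e
  have h := sum_union_inter (s₁ := A) (s₂ := B) (f := sym2Len)
  unfold netLength at *
  linarith

lemma netLength_biUnion_le {ι : Type*} (s : Finset ι) (t : ι → Finset (Sym2 Point)) :
    netLength (s.biUnion t) ≤ ∑ i ∈ s, netLength (t i) := by
  rw [← sup_eq_biUnion]
  exact apply_sup_le_sum (by simp [netLength]) (netLength_union_le _ _) s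

lemma euclen_eq_manh_of_axisAligned {p q : Point} (h : axisAligned p q) :
    euclen p q = manh p q := by
  rcases h with h | h <;> simp [euclen, manh, h, Real.sqrt_sq_eq_abs]

lemma manh_le_Ico_sum_manh (a : ℕ → Point) {m n : ℕ} (h : m ≤ n) :
    manh (a m) (a n) ≤ ∑ i ∈ Ico m n, manh (a i) (a (i + 1)) := by
  simp only [manh, ← Real.dist_eq, sum_add_distrib]
  exact add_le_add (dist_le_Ico_sum_dist (fun i => (a i).1) h)
    (dist_le_Ico_sum_dist (fun i => (a i).2) h)

lemma inBox_of_manh_add_manh_le {s t p : Point} (h : manh s p + manh p t ≤ manh s t) :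
    inBox s t p := by
  have between : ∀ a b c : ℝ, |a - b| + |b - c| ≤ |a - c| → b ∈ Set.uIcc a c := by
    intro a b c hab
    rw [← segment_eq_uIcc]
    refine ((dist_add_dist_eq_iff (V := ℝ) (P := ℝ)).1 ?_).mem_segment
    simp only [Real.dist_eq]
    exact le_antisymm hab (abs_sub_le a b c)
  have hx := abs_sub_le s.1 p.1 t.1
  have hy := abs_sub_le s.2 p.2 t.2
  unfold manh at h
  have hp : p ∈ Set.uIcc s.1 t.1 ×ˢ Set.uIcc s.2 t.2 :=
    ⟨between _ _ _ (by linarith), between _ _ _ (by linarith)⟩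
  rwa [Set.uIcc_prod_uIcc] at hp

namespace GPath

lemma edge_injective (π : GPath) : Function.Injective π.edge := by
  intro i j h
  rw [edge, edge, Sym2.eq_iff] at h
  rcases h with ⟨h, -⟩ | ⟨h₁, h₂⟩
  · exact Fin.castSucc_injective _ (π.inj h)
  · have e₁ := congrArg Fin.val (π.inj h₁)
    have e₂ := congrArg Fin.val (π.inj h₂)
    simp only [Fin.val_castSucc, Fin.val_succ] at e₁ e₂
    omega

lemma netLength_edges (π : GPath) : netLength π.edges = π.length :=
  sum_image fun _ _ _ _ h => π.edge_injective h

end GPath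

namespace IsMPath

variable {s t : Point} {π : GPath}

lemma netLength_edges (hπ : IsMPath s t π) : netLength π.edges = manh s t :=
  π.netLength_edges.trans hπ.2.2.2

lemma inBox_pts (hπ : IsMPath s t π) (j : Fin (π.k + 1)) : inBox s t (π.pts j) := by
  obtain ⟨hs, ht, hax, hlen⟩ := hπ
  set a : ℕ → Point := fun i => π.pts (Fin.clamp i π.k)
  have ha : ∀ i : Fin (π.k + 1), a i = π.pts i := fun i =>
    congrArg π.pts (Fin.ext (min_eq_left (Nat.lt_succ_iff.1 i.isLt)))
  have hsum : ∑ i ∈ range π.k, manh (a i) (a (i + 1)) = manh s t := by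
    rw [← hlen, GPath.length, ← Fin.sum_univ_eq_sum_range]
    refine sum_congr rfl fun i _ => ?_
    rw [euclen_eq_manh_of_axisAligned (hax i), ← ha, ← ha]
    rfl
  have hj : j.val ≤ π.k := Nat.lt_succ_iff.1 j.isLt
  apply inBox_of_manh_add_manh_le
  calc manh s (π.pts j) + manh (π.pts j) t
      = manh (a 0) (a j) + manh (a j) (a π.k) := by
        rw [ha, ← hs, ← ht, ← ha 0, ← ha (Fin.last _)]
        rfl
    _ ≤ ∑ i ∈ range j, manh (a i) (a (i + 1))
          + ∑ i ∈ Ico j.val π.k, manh (a i) (a (i + 1)) := by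
        gcongr
        · simpa using manh_le_Ico_sum_manh a (Nat.zero_le j)
        · exact manh_le_Ico_sum_manh a hj
    _ = manh s t := by rw [sum_range_add_sum_Ico _ hj, hsum]

lemma inBox_of_mem_edges (hπ : IsMPath s t π) {p q : Point} (he : s(p, q) ∈ π.edges) :
    inBox s t p ∧ inBox s t q := by
  obtain ⟨i, -, hi⟩ := mem_image.1 he
  rw [GPath.edge, Sym2.eq_iff] at hi
  rcases hi with ⟨rfl, rfl⟩ | ⟨rfl, rfl⟩
  · exact ⟨hπ.inBox_pts _, hπ.inBox_pts _⟩
  · exact ⟨hπ.inBox_pts _, hπ.inBox_pts _⟩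

end IsMPath

lemma InPi.disjoint_edges {P : Inst} {u v : Point × Point} {πu πv : GPath}
    (hu : InPi P u πu) (hv : InPi P v πv) (hne : u ≠ v) (hnadj : ¬ IGAdj P u v) :
    Disjoint πu.edges πv.edges := by
  refine disjoint_left.2 fun e heu hev => hnadj ?_
  obtain ⟨i, -, rfl⟩ := mem_image.1 heu
  obtain ⟨hpu, hqu⟩ := hu.1.inBox_of_mem_edges heu
  obtain ⟨hpv, hqv⟩ := hv.1.inBox_of_mem_edges hev
  exact ⟨hne, _, _, hu.2 i, hpu, hqu, hpv, hqv⟩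

lemma netOf_mono {S P : Inst} (h : S ⊆ P) (f : Point × Point → GPath) :
    netOf S f ⊆ netOf P f :=
  biUnion_subset_biUnion_of_subset_left _ h

lemma netLength_netOf_le_sum_fiberwise {ι : Type*} [Fintype ι] [DecidableEq ι] (P : Inst)
    (c : Point × Point → ι) (f : Point × Point → GPath) :
    netLength (netOf P f) ≤ ∑ i, netLength (netOf (P.filter (c · = i)) f) := by
  have hcover : netOf P f = univ.biUnion fun i => netOf (P.filter (c · = i)) f := by
    ext e
    simp [netOf]
  rw [hcover]
  exact netLength_biUnion_le _ _

lemma netLength_netOf_of_pairwise_not_IGAdj {P S : Inst} {f : Point × Point → GPath}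
    (hf : ∀ v ∈ S, InPi P v (f v))
    (hS : (S : Set (Point × Point)).Pairwise (¬ IGAdj P · ·)) :
    netLength (netOf S f) = ∑ v ∈ S, manh v.1 v.2 := by
  have hdisj : (S : Set (Point × Point)).PairwiseDisjoint fun v => (f v).edges :=
    fun u hu v hv hne => (hf u hu).disjoint_edges (hf v hv) hne (hS hu hv hne)
  rw [netOf, netLength, sum_biUnion hdisj]
  exact sum_congr rfl fun v hv => (hf v hv).1.netLength_edges

/-- Proposition B.1: if the intersection graph `IG[P]` is `k`-colorable, then every feasible
solution has length at most `k` times the length of an optimal solution. -/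
theorem coloring_approximation (P : Inst) (k : ℕ)
    (hcol : ∃ c : Point × Point → Fin k,
      ∀ u ∈ P, ∀ v ∈ P, IGAdj P u v → c u ≠ c v)
    (f g : Point × Point → GPath) (hf : IsOptChoice P f) (hg : IsFeasChoice P g) :
    netLength (netOf P g) ≤ (k : ℝ) * netLength (netOf P f) := by
  obtain ⟨c, hc⟩ := hcol
  have hclass : ∀ i, ((P.filter (c · = i) : Inst) : Set (Point × Point)).Pairwise
      (¬ IGAdj P · ·) := by
    intro i u hu v hv _ hadj
    simp only [coe_filter, Set.mem_ofPred_eq] at hu hv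
    exact hc u hu.1 v hv.1 hadj (hu.2.trans hv.2.symm)
  have hfeas : ∀ h, IsFeasChoice P h → ∀ i, ∀ v ∈ P.filter (c · = i), InPi P v (h v) :=
    fun h hh i v hv => hh v (mem_filter.1 hv).1
  calc netLength (netOf P g)
      ≤ ∑ i, netLength (netOf (P.filter (c · = i)) g) :=
        netLength_netOf_le_sum_fiberwise P c g
    _ = ∑ i, netLength (netOf (P.filter (c · = i)) f) := sum_congr rfl fun i _ => by
        rw [netLength_netOf_of_pairwise_not_IGAdj (hfeas g hg i) (hclass i),
          netLength_netOf_of_pairwise_not_IGAdj (hfeas f hf.1 i) (hclass i)]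
    _ ≤ ∑ _i : Fin k, netLength (netOf P f) :=
        sum_le_sum fun i _ => netLength_mono (netOf_mono (filter_subset _ _) f)
    _ = k * netLength (netOf P f) := by simp

end
end

section
/- Let P be a GMMN instance, let l = (s_l, t_l) ∈ P be a regular pair, and let p and q be vertices of the Hanan grid H(P) lying in B(l) with p ≤ q. Then every Manhattan path π_v ∈ Π_P(p,q) is completely included in some Manhattan path π_l ∈ Π_P(l), i.e., there exists π_l ∈ Π_P(l) having π_v as a subgraph. (This is the key step in the proof of Lemma 3.1(1).) -/
noncomputable section
open scoped Classical

/-! An M-path between `p ≤ q` only moves up and right: the coordinate sum `x + y` telescopes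
along it to `d(p, q)`, which is also its length, i.e. the sum of the Manhattan lengths of its
edges, and each edge can only lose against its Manhattan length. So the points of the path
strictly increase, and prepending a monotone staircase on the Hanan grid from `s_l` to `p` and
appending one from `q` to `t_l` yields a simple monotone grid path, i.e. an M-path for `l`.
Staircases exist because consecutive elements of the finite sets of grid x- and y-coordinates
span Hanan grid edges. -/

open Relation

theorem Fin.sum_succ_sub_castSucc {M : Type*} [AddCommGroup M] :
    ∀ {n : ℕ} (f : Fin (n + 1) → M),
      ∑ i : Fin n, (f i.succ - f i.castSucc) = f (Fin.last n) - f 0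
  | 0, f => by simp
  | n + 1, f => by
    rw [Fin.sum_univ_castSucc]
    simp only [Fin.succ_castSucc]
    rw [Fin.sum_succ_sub_castSucc (fun i => f i.castSucc)]
    simp only [Fin.succ_last, Fin.castSucc_zero]
    abel

lemma sub_le_manh (u v : Point) : (v.1 + v.2) - (u.1 + u.2) ≤ manh u v := by
  rw [manh, abs_sub_comm u.1, abs_sub_comm u.2]
  linarith [le_abs_self (v.1 - u.1), le_abs_self (v.2 - u.2)]

lemma manh_eq_iff_le {u v : Point} : manh u v = (v.1 + v.2) - (u.1 + u.2) ↔ u ≤ v := by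
  rw [manh, Prod.le_def, abs_sub_comm u.1, abs_sub_comm u.2]
  have hx := le_abs_self (v.1 - u.1)
  have hy := le_abs_self (v.2 - u.2)
  refine ⟨fun h => ⟨?_, ?_⟩, fun ⟨h₁, h₂⟩ => ?_⟩
  · linarith [abs_nonneg (v.1 - u.1)]
  · linarith [abs_nonneg (v.2 - u.2)]
  · rw [abs_of_nonneg (sub_nonneg.2 h₁), abs_of_nonneg (sub_nonneg.2 h₂)]
    ring

lemma euclen_eq_manh {u v : Point} (h : axisAligned u v) : euclen u v = manh u v := by
  unfold euclen manh
  rcases h with h | h <;> simp [h, Real.sqrt_sq_eq_abs]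

namespace GPath

lemma length_eq_sum_manh {π : GPath}
    (h : ∀ i : Fin π.k, axisAligned (π.pts i.castSucc) (π.pts i.succ)) :
    π.length = ∑ i : Fin π.k, manh (π.pts i.castSucc) (π.pts i.succ) :=
  Finset.sum_congr rfl fun i _ => euclen_eq_manh (h i)

lemma castSucc_le_succ_of_isMPath {s t : Point} {π : GPath} (h : IsMPath s t π) (hst : s ≤ t)
    (i : Fin π.k) : π.pts i.castSucc ≤ π.pts i.succ := by
  obtain ⟨h0, hlast, hax, hlen⟩ := h
  have htel : ∑ j : Fin π.k, (((π.pts j.succ).1 + (π.pts j.succ).2) -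
      ((π.pts j.castSucc).1 + (π.pts j.castSucc).2)) =
      ∑ j : Fin π.k, manh (π.pts j.castSucc) (π.pts j.succ) := by
    rw [Fin.sum_succ_sub_castSucc (fun j => (π.pts j).1 + (π.pts j).2), h0, hlast,
      ← length_eq_sum_manh hax, hlen, manh_eq_iff_le.2 hst]
  exact manh_eq_iff_le.1
    ((Finset.sum_eq_sum_iff_of_le fun j _ => sub_le_manh _ _).1 htel i (Finset.mem_univ i)).symm

def cons (z : Point) (π : GPath) (hz : z ∉ Set.range π.pts) : GPath :=
  ⟨π.k + 1, Fin.cons z π.pts, Fin.cons_injective_iff.2 ⟨hz, π.inj⟩⟩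

def snoc (π : GPath) (z : Point) (hz : z ∉ Set.range π.pts) : GPath :=
  ⟨π.k + 1, Fin.snoc π.pts z, Fin.snoc_injective_iff.2 ⟨π.inj, hz⟩⟩

lemma edges_subset_cons (π : GPath) {z : Point} (hz : z ∉ Set.range π.pts) :
    π.edges ⊆ (π.cons z hz).edges := by
  intro e he
  obtain ⟨i, -, rfl⟩ := Finset.mem_image.1 he
  refine Finset.mem_image.2 ⟨i.succ, Finset.mem_univ _, ?_⟩
  simp [edge, cons]

lemma edges_subset_snoc (π : GPath) {z : Point} (hz : z ∉ Set.range π.pts) :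
    π.edges ⊆ (π.snoc z hz).edges := by
  intro e he
  obtain ⟨i, -, rfl⟩ := Finset.mem_image.1 he
  refine Finset.mem_image.2 ⟨i.castSucc, Finset.mem_univ _, ?_⟩
  simp only [edge, snoc, Fin.succ_castSucc, Fin.snoc_castSucc]

end GPath

def IsUpEdge (P : Inst) (z w : Point) : Prop := IsHananEdge P z w ∧ z ≤ w

lemma IsUpEdge.lt {P : Inst} {z w : Point} (h : IsUpEdge P z w) : z < w :=
  lt_of_le_of_ne h.2 h.1.2.2.1

def IsUpPath (P : Inst) (a b : Point) (π : GPath) : Prop :=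
  π.pts 0 = a ∧ π.pts (Fin.last π.k) = b ∧
  ∀ i : Fin π.k, IsUpEdge P (π.pts i.castSucc) (π.pts i.succ)

namespace IsUpPath

variable {P : Inst} {a b : Point} {π : GPath}

lemma strictMono (h : IsUpPath P a b π) : StrictMono π.pts :=
  Fin.strictMono_iff_lt_succ.2 fun i => (h.2.2 i).lt

lemma of_inPi (h : InPi P (a, b) π) (hab : a ≤ b) : IsUpPath P a b π :=
  ⟨h.1.1, h.1.2.1, fun i => ⟨h.2 i, GPath.castSucc_le_succ_of_isMPath h.1 hab i⟩⟩

lemma inPi (h : IsUpPath P a b π) : InPi P (a, b) π := by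
  have hmono := h.strictMono.monotone
  obtain ⟨h0, hlast, hstep⟩ := h
  have hax : ∀ i : Fin π.k, axisAligned (π.pts i.castSucc) (π.pts i.succ) :=
    fun i => (hstep i).1.2.2.2.1
  have hab : a ≤ b := h0 ▸ hlast ▸ hmono (Fin.zero_le _)
  refine ⟨⟨h0, hlast, hax, ?_⟩, fun i => (hstep i).1⟩
  rw [GPath.length_eq_sum_manh hax, manh_eq_iff_le.2 hab, ← h0, ← hlast,
    ← Fin.sum_succ_sub_castSucc (fun j => (π.pts j).1 + (π.pts j).2)]
  exact Finset.sum_congr rfl fun i _ => manh_eq_iff_le.2 (hstep i).2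

lemma exists_cons (h : IsUpPath P a b π) {z : Point} (hz : IsUpEdge P z a) :
    ∃ π' : GPath, IsUpPath P z b π' ∧ π.edges ⊆ π'.edges := by
  have hzπ : z ∉ Set.range π.pts := by
    rintro ⟨i, hi⟩
    have := h.strictMono.monotone (Fin.zero_le i)
    rw [h.1, hi] at this
    exact hz.lt.not_ge this
  refine ⟨π.cons z hzπ, ⟨rfl, ?_, ?_⟩, π.edges_subset_cons hzπ⟩
  · simpa [GPath.cons] using h.2.1
  · refine Fin.cases ?_ fun i => ?_
    · simpa [GPath.cons, h.1] using hz
    · simpa [GPath.cons] using h.2.2 i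

lemma exists_snoc (h : IsUpPath P a b π) {z : Point} (hz : IsUpEdge P b z) :
    ∃ π' : GPath, IsUpPath P a z π' ∧ π.edges ⊆ π'.edges := by
  have hzπ : z ∉ Set.range π.pts := by
    rintro ⟨i, hi⟩
    have := h.strictMono.monotone (Fin.le_last i)
    rw [h.2.1, hi] at this
    exact hz.lt.not_ge this
  refine ⟨π.snoc z hzπ, ⟨?_, by simp [GPath.snoc], ?_⟩, π.edges_subset_snoc hzπ⟩
  · show Fin.snoc (α := fun _ => Point) π.pts z (Fin.castSucc 0) = a
    rw [Fin.snoc_castSucc, h.1]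
  refine Fin.lastCases ?_ fun i => ?_
  · simpa only [GPath.snoc, Fin.snoc_castSucc, Fin.succ_last, Fin.snoc_last, h.2.1] using hz
  · simpa only [GPath.snoc, Fin.succ_castSucc, Fin.snoc_castSucc] using h.2.2 i

lemma exists_extend (h : IsUpPath P a b π) {a' b' : Point}
    (ha : ReflTransGen (IsUpEdge P) a' a) (hb : ReflTransGen (IsUpEdge P) b b') :
    ∃ π' : GPath, IsUpPath P a' b' π' ∧ π.edges ⊆ π'.edges := by
  induction hb with
  | refl =>
    induction ha using ReflTransGen.head_induction_on with
    | refl => exact ⟨π, h, subset_rfl⟩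
    | head hz _ ih =>
      obtain ⟨π₁, h₁, hsub₁⟩ := ih
      obtain ⟨π₂, h₂, hsub₂⟩ := h₁.exists_cons hz
      exact ⟨π₂, h₂, hsub₁.trans hsub₂⟩
  | tail _ hz ih =>
    obtain ⟨π₁, h₁, hsub₁⟩ := ih
    obtain ⟨π₂, h₂, hsub₂⟩ := h₁.exists_snoc hz
    exact ⟨π₂, h₂, hsub₁.trans hsub₂⟩

end IsUpPath

def hananXs (P : Inst) : Finset ℝ := (P.image fun v => v.1.1) ∪ (P.image fun v => v.2.1)

def hananYs (P : Inst) : Finset ℝ := (P.image fun v => v.1.2) ∪ (P.image fun v => v.2.2)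

lemma mem_hananV {P : Inst} {z : Point} :
    z ∈ hananV P ↔ z.1 ∈ hananXs P ∧ z.2 ∈ hananYs P :=
  Finset.mem_product

lemma fst_mem_hananV {P : Inst} {l : Point × Point} (hl : l ∈ P) : l.1 ∈ hananV P :=
  mem_hananV.2 ⟨Finset.mem_union_left _ (Finset.mem_image_of_mem _ hl),
    Finset.mem_union_left _ (Finset.mem_image_of_mem _ hl)⟩

lemma snd_mem_hananV {P : Inst} {l : Point × Point} (hl : l ∈ P) : l.2 ∈ hananV P :=
  mem_hananV.2 ⟨Finset.mem_union_right _ (Finset.mem_image_of_mem _ hl),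
    Finset.mem_union_right _ (Finset.mem_image_of_mem _ hl)⟩

lemma inBox_iff_of_le {u v z : Point} (huv : u ≤ v) : inBox u v z ↔ u ≤ z ∧ z ≤ v := by
  rw [inBox, inf_eq_left.2 huv, sup_eq_right.2 huv]

lemma isUpEdge_of_lt {P : Inst} {z w : Point} (hz : z ∈ hananV P) (hw : w ∈ hananV P)
    (hzw : z < w) (hax : axisAligned z w)
    (hgap : ∀ v ∈ hananV P, z ≤ v → v ≤ w → v = z ∨ v = w) : IsUpEdge P z w :=
  ⟨⟨hz, hw, hzw.ne, hax, fun v hv hbox => ((inBox_iff_of_le hzw.le).1 hbox).elim (hgap v hv)⟩,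
    hzw.le⟩

lemma Subtype.eq_or_eq_of_covBy {α : Type*} [LinearOrder α] {p : α → Prop} {x x' : Subtype p}
    (h : x ⋖ x') {c : α} (hc : p c) (hxc : (x : α) ≤ c) (hcx : c ≤ x') :
    c = x ∨ c = x' := by
  by_contra! hne
  exact h.2 (c := ⟨c, hc⟩) (hxc.lt_of_ne' hne.1) (hcx.lt_of_ne hne.2)

lemma isUpEdge_of_covBy_fst {P : Inst} {x x' : hananXs P} (h : x ⋖ x') {y : ℝ}
    (hy : y ∈ hananYs P) : IsUpEdge P (x, y) (x', y) := by
  refine isUpEdge_of_lt (mem_hananV.2 ⟨x.2, hy⟩) (mem_hananV.2 ⟨x'.2, hy⟩)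
    (Prod.mk_lt_mk_of_lt_of_le h.lt le_rfl) (Or.inr rfl) fun v hv hxv hvx => ?_
  have hvy : v.2 = y := le_antisymm hvx.2 hxv.2
  rcases Subtype.eq_or_eq_of_covBy h (mem_hananV.1 hv).1 hxv.1 hvx.1 with hvx | hvx
  · exact Or.inl (Prod.ext hvx hvy)
  · exact Or.inr (Prod.ext hvx hvy)

lemma isUpEdge_of_covBy_snd {P : Inst} {y y' : hananYs P} (h : y ⋖ y') {x : ℝ}
    (hx : x ∈ hananXs P) : IsUpEdge P (x, y) (x, y') := by
  refine isUpEdge_of_lt (mem_hananV.2 ⟨hx, y.2⟩) (mem_hananV.2 ⟨hx, y'.2⟩)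
    (Prod.mk_lt_mk_of_le_of_lt le_rfl h.lt) (Or.inl rfl) fun v hv hyv hvy => ?_
  have hvx : v.1 = x := le_antisymm hvy.1 hyv.1
  rcases Subtype.eq_or_eq_of_covBy h (mem_hananV.1 hv).2 hyv.2 hvy.2 with hvy | hvy
  · exact Or.inl (Prod.ext hvx hvy)
  · exact Or.inr (Prod.ext hvx hvy)

lemma reflTransGen_isUpEdge {P : Inst} {a b : Point} (ha : a ∈ hananV P) (hb : b ∈ hananV P)
    (hab : a ≤ b) : ReflTransGen (IsUpEdge P) a b := by
  obtain ⟨ha₁, ha₂⟩ := mem_hananV.1 ha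
  obtain ⟨hb₁, hb₂⟩ := mem_hananV.1 hb
  let : LocallyFiniteOrder (hananXs P) := Fintype.toLocallyFiniteOrder
  let : LocallyFiniteOrder (hananYs P) := Fintype.toLocallyFiniteOrder
  have hx : ReflTransGen (· ⋖ ·) (⟨a.1, ha₁⟩ : hananXs P) ⟨b.1, hb₁⟩ :=
    le_iff_reflTransGen_covBy.1 hab.1
  have hy : ReflTransGen (· ⋖ ·) (⟨a.2, ha₂⟩ : hananYs P) ⟨b.2, hb₂⟩ :=
    le_iff_reflTransGen_covBy.1 hab.2
  exact
    (hx.lift (fun x : hananXs P => ((x : ℝ), a.2)) fun _ _ h => isUpEdge_of_covBy_fst h ha₂).trans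
      (hy.lift (fun y : hananYs P => (b.1, (y : ℝ))) fun _ _ h => isUpEdge_of_covBy_snd h hb₁)

/-- Key step of Lemma 3.1(1): for a regular pair `l ∈ P` and grid vertices `p ≤ q` in `B(l)`,
every M-path for `(p, q)` on the Hanan grid is completely contained in some M-path for `l`. -/
theorem regular_extension (P : Inst) (l : Point × Point) (hl : l ∈ P)
    (hreg : Regular l) (p q : Point)
    (hp : p ∈ hananV P) (hq : q ∈ hananV P)
    (hpB : inBox l.1 l.2 p) (hqB : inBox l.1 l.2 q) (hpq : p ≤ q)
    (πv : GPath) (hπv : InPi P (p, q) πv) :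
    ∃ πl : GPath, InPi P l πl ∧ πv.edges ⊆ πl.edges := by
  have hl₁₂ : l.1 ≤ l.2 := hreg
  obtain ⟨πl, hπl, hsub⟩ := (IsUpPath.of_inPi hπv hpq).exists_extend
    (reflTransGen_isUpEdge (fst_mem_hananV hl) hp ((inBox_iff_of_le hl₁₂).1 hpB).1)
    (reflTransGen_isUpEdge hq (snd_mem_hananV hl) ((inBox_iff_of_le hl₁₂).1 hqB).2)
  exact ⟨πl, hπl.inPi, hsub⟩

end
end
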